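/- arXiv:1109.2628 — 4 statements merged into one kernel-verified Lean document; each statement's English description precedes it below -/
import Mathlib

section
/- Let T : [0,1) → [0,1) have full increasing branches over the nodes 0 = a_0 < a_1 < ⋯ < a_N = 1, with branch inverses τ_0,…,τ_{N−1}, and let μ be a probability measure on [0,1) that is absolutely continuous with respect to Lebesgue measure. Set F₀(x) = μ([0,x]). Then for all x, y ∈ (0,1), writing n₁ for the unique index k with x ∈ [a_k, a_{k+1}), one has μ{u ∈ [0,1) : u ≤ x and T(u) ≤ y} = Σ_{k=0}^{n₁−1} (F₀(τ_k(y)) − F₀(a_k)) + min{F₀(x), F₀(τ_{n₁}(y))} − F₀(a_{n₁}), where the sum is empty when n₁ = 0. -/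
open Set MeasureTheory

/-!
Each branch `[a_k, a_{k+1})` with `k ≤ n₁` meets the set `{u ≤ x, T u ≤ y}` in the interval
`[a_k, min x (τ_k y)]`, because `T` is strictly increasing on the branch and `T (τ_k y) = y`;
branches beyond `n₁` lie to the right of `x`. Summing over the branches, and using that `μ` has
no atoms (it is absolutely continuous), each interval contributes
`F₀ (min x (τ_k y)) - F₀ a_k`, where the minimum is `τ_k y` for `k < n₁`.
-/

section Intervals

variable {α : Type*} [LinearOrder α] [TopologicalSpace α] [OrderClosedTopology α]
  [MeasurableSpace α] [OpensMeasurableSpace α] (μ : Measure α)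

theorem measure_inter_Ico_eq_sum_range (s : Set α) {a : ℕ → α} {m : ℕ}
    (ha : MonotoneOn a (Iic m)) :
    μ (s ∩ Ico (a 0) (a m)) = ∑ k ∈ Finset.range m, μ (s ∩ Ico (a k) (a (k + 1))) := by
  induction m with
  | zero => simp
  | succ m ih =>
    have h0m : a 0 ≤ a m := ha (by simp) (by simp) m.zero_le
    have hm : a m ≤ a (m + 1) := ha (by simp) (by simp) m.le_succ
    rw [Finset.sum_range_succ, ← ih (ha.mono (Iic_subset_Iic.2 m.le_succ)),
      ← measure_inter_add_sdiff (s ∩ Ico (a 0) (a (m + 1)))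
        (measurableSet_Ico (a := a 0) (b := a m)),
      ← Ico_union_Ico_eq_Ico h0m hm, inter_assoc, union_inter_cancel_left, inter_sdiff_assoc,
      union_sdiff_left, sdiff_eq_left.2 (Ico_disjoint_Ico_same).symm]

theorem measure_Icc_toReal_eq_sub [IsFiniteMeasure μ] {r p q : α} (hrp : r ≤ p) (hpq : p ≤ q)
    (hp : μ {p} = 0) :
    (μ (Icc p q)).toReal = (μ (Icc r q)).toReal - (μ (Icc r p)).toReal := by
  have hdisj : Disjoint (Icc r p) (Ioc p q) :=
    disjoint_left.2 fun _ hu hu' => (hu.2.trans_lt hu'.1).false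
  rw [← Icc_union_Ioc_eq_Icc hrp hpq, measure_union hdisj measurableSet_Ioc,
    ← measure_congr (Ioc_ae_eq_Icc' hp),
    ENNReal.toReal_add (measure_ne_top _ _) (measure_ne_top _ _)]
  ring

end Intervals

theorem StrictMonoOn.setOf_le_and_le_inter_Ico {α β : Type*} [LinearOrder α] [Preorder β]
    {T : α → β} {s t x z : α} (hT : StrictMonoOn T (Ico s t)) (hz : z ∈ Ico s t) :
    {u | u ≤ x ∧ T u ≤ T z} ∩ Ico s t = Icc s (min x z) := by
  ext u
  simp only [mem_inter_iff, mem_ofPred_eq, mem_Icc, le_min_iff]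
  constructor
  · rintro ⟨⟨hux, hTu⟩, hu⟩
    exact ⟨hu.1, hux, (hT.le_iff_le hu hz).1 hTu⟩
  · rintro ⟨hsu, hux, huz⟩
    exact ⟨⟨hux, (hT.le_iff_le ⟨hsu, huz.trans_lt hz.2⟩ hz).2 huz⟩, hsu, huz.trans_lt hz.2⟩

theorem joint_distribution_formula_full_branches_general
    (T : ℝ → ℝ) (N : ℕ) (a : ℕ → ℝ) (τ : ℕ → ℝ → ℝ)
    (ha0 : a 0 = 0) (haN : a N = 1) (hamono : StrictMonoOn a (Set.Iic N))
    (hbranch : ∀ k < N,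
      ContinuousOn T (Ico (a k) (a (k + 1))) ∧
      StrictMonoOn T (Ico (a k) (a (k + 1))) ∧
      T (a k) = 0 ∧ T '' Ico (a k) (a (k + 1)) = Ico (0 : ℝ) 1)
    (hτ : ∀ k < N, (∀ x ∈ Ico (a k) (a (k + 1)), τ k (T x) = x) ∧
      ∀ y ∈ Ico (0 : ℝ) 1, τ k y ∈ Ico (a k) (a (k + 1)) ∧ T (τ k y) = y)
    (μ : Measure ℝ) [IsProbabilityMeasure μ]
    (hac : μ ≪ volume)
    (F₀ : ℝ → ℝ) (hF₀ : ∀ x, F₀ x = (μ (Icc 0 x)).toReal)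
    (x y : ℝ) (hy : y ∈ Ioo (0 : ℝ) 1)
    (n₁ : ℕ) (hn₁ : n₁ < N) (hxn : x ∈ Ico (a n₁) (a (n₁ + 1))) :
    (μ {u | u ∈ Ico (0 : ℝ) 1 ∧ u ≤ x ∧ T u ≤ y}).toReal =
      (∑ k ∈ Finset.range n₁, (F₀ (τ k y) - F₀ (a k))) +
        (min (F₀ x) (F₀ (τ n₁ y)) - F₀ (a n₁)) := by
  set S := {u | u ∈ Ico (0 : ℝ) 1 ∧ u ≤ x ∧ T u ≤ y}
  have hamon : MonotoneOn a (Iic N) := hamono.monotoneOn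
  have hτy : ∀ k < N, τ k y ∈ Ico (a k) (a (k + 1)) ∧ T (τ k y) = y :=
    fun k hk => (hτ k hk).2 y (Ioo_subset_Ico_self hy)
  have ha_nonneg : ∀ k ≤ N, 0 ≤ a k := fun k hk =>
    ha0 ▸ hamon (by simp) (mem_Iic.2 hk) k.zero_le
  have ha_le_x : ∀ k ≤ n₁, a k ≤ x := fun k hk =>
    (hamon (mem_Iic.2 (hk.trans hn₁.le)) (mem_Iic.2 hn₁.le) hk).trans hxn.1
  have hpiece : ∀ k ≤ n₁, S ∩ Ico (a k) (a (k + 1)) = Icc (a k) (min x (τ k y)) := by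
    intro k hk
    have hkN : k < N := hk.trans_lt hn₁
    have hbranch_sub : Ico (a k) (a (k + 1)) ⊆ Ico 0 1 :=
      Ico_subset_Ico (ha_nonneg k hkN.le) (haN ▸ hamon (mem_Iic.2 hkN) (mem_Iic.2 le_rfl) hkN)
    rw [← (hbranch k hkN).2.1.setOf_le_and_le_inter_Ico (hτy k hkN).1, (hτy k hkN).2]
    ext u
    exact ⟨fun ⟨hu, hu'⟩ => ⟨hu.2, hu'⟩, fun ⟨hu, hu'⟩ => ⟨⟨hbranch_sub hu', hu⟩, hu'⟩⟩
  have hS : S ⊆ Ico (a 0) (a (n₁ + 1)) := fun u ⟨hu, hux, _⟩ => ⟨ha0 ▸ hu.1, hux.trans_lt hxn.2⟩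
  have hF₀mono : Monotone F₀ := fun p q hpq => by
    simpa only [hF₀] using
      ENNReal.toReal_mono (measure_ne_top _ _) (measure_mono (Icc_subset_Icc_right hpq))
  calc (μ S).toReal = (μ (S ∩ Ico (a 0) (a (n₁ + 1)))).toReal := by rw [inter_eq_left.2 hS]
    _ = ∑ k ∈ Finset.range (n₁ + 1), (F₀ (min x (τ k y)) - F₀ (a k)) := by
      rw [measure_inter_Ico_eq_sum_range μ S (hamon.mono (Iic_subset_Iic.2 hn₁)),
        ENNReal.toReal_sum fun _ _ => measure_ne_top _ _]
      refine Finset.sum_congr rfl fun k hk => ?_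
      have hk : k ≤ n₁ := Nat.lt_succ_iff.1 (Finset.mem_range.1 hk)
      rw [hpiece k hk, hF₀, hF₀]
      exact measure_Icc_toReal_eq_sub μ (ha_nonneg k (hk.trans hn₁.le))
        (le_min (ha_le_x k hk) (hτy k (hk.trans_lt hn₁)).1.1) (hac Real.volume_singleton)
    _ = _ := by
      rw [Finset.sum_range_succ, hF₀mono.map_min]
      congr 1
      refine Finset.sum_congr rfl fun k hk => ?_
      have hk : k < n₁ := Finset.mem_range.1 hk
      rw [min_eq_right ((hτy k (hk.trans hn₁)).1.2.le.trans (ha_le_x (k + 1) hk))]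

theorem joint_distribution_formula_full_branches
    (T : ℝ → ℝ) (N : ℕ) (hN : 1 ≤ N) (a : ℕ → ℝ) (τ : ℕ → ℝ → ℝ)
    (ha0 : a 0 = 0) (haN : a N = 1) (hamono : StrictMonoOn a (Set.Iic N))
    (hbranch : ∀ k < N,
      ContinuousOn T (Ico (a k) (a (k + 1))) ∧
      StrictMonoOn T (Ico (a k) (a (k + 1))) ∧
      T (a k) = 0 ∧ T '' Ico (a k) (a (k + 1)) = Ico (0 : ℝ) 1)
    (hτ : ∀ k < N, (∀ x ∈ Ico (a k) (a (k + 1)), τ k (T x) = x) ∧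
      ∀ y ∈ Ico (0 : ℝ) 1, τ k y ∈ Ico (a k) (a (k + 1)) ∧ T (τ k y) = y)
    (μ : Measure ℝ) [IsProbabilityMeasure μ]
    (hμ1 : μ (Ico (0 : ℝ) 1) = 1) (hac : μ ≪ volume)
    (F₀ : ℝ → ℝ) (hF₀ : ∀ x, F₀ x = (μ (Icc 0 x)).toReal)
    (x y : ℝ) (hx : x ∈ Ioo (0 : ℝ) 1) (hy : y ∈ Ioo (0 : ℝ) 1)
    (n₁ : ℕ) (hn₁ : n₁ < N) (hxn : x ∈ Ico (a n₁) (a (n₁ + 1))) :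
    (μ {u | u ∈ Ico (0 : ℝ) 1 ∧ u ≤ x ∧ T u ≤ y}).toReal =
      (∑ k ∈ Finset.range n₁, (F₀ (τ k y) - F₀ (a k))) +
        (min (F₀ x) (F₀ (τ n₁ y)) - F₀ (a n₁)) :=
  joint_distribution_formula_full_branches_general T N a τ ha0 haN hamono hbranch hτ μ hac F₀ hF₀ x
    y hy n₁ hn₁ hxn
end

section
/- Let T : [0,1) → [0,1) have full increasing branches over the nodes 0 = a_0 < a_1 < ⋯ < a_N = 1, with branch inverses τ_0,…,τ_{N−1}, and let μ be a probability measure on [0,1) that is absolutely continuous with respect to Lebesgue measure with a continuous, strictly positive density, so that F₀(x) = μ([0,x]) is a homeomorphism of [0,1]. For each k let ℱ_k : [0,1] → [F₀(a_k), F₀(a_{k+1})] be the continuous extension of F₀ ∘ τ_k ∘ F₀^{−1} with ℱ_k(1) = F₀(a_{k+1}). Then the support of the pushforward of μ under the map u ↦ (F₀(u), F₀(T(u))) (the copula measure of the pair (U, T(U)) with U distributed as μ) equals the union ⋃_{k=0}^{N−1} {(ℱ_k(v), v) : v ∈ [0,1]}. -/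
/-!
An increasing bijection `F₀` of `[0,1]` is continuous, and `μ` charges every nondegenerate
subinterval of `[0,1]`. On the `k`-th branch the map `u ↦ (F₀ u, F₀ (T u))` is continuous and
equals `(ℱ_k v, v)` with `v = F₀ (T u)`; as `u` runs through the branch, `v` runs through `[0,1)`.
Hence the pushforward lives on the union of the graphs. Conversely, if `F` is closed and has full
pushforward measure, the set of points of a branch that are not mapped into `F` is relatively open
and null, hence empty; so `F` contains the graphs over `(0,1)` and, being closed, their closures.
-/

open Set MeasureTheory Filter Topology

theorem Ico_subset_iUnion_Ico_succ {α : Type*} [LinearOrder α] (a : ℕ → α) :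
    ∀ n : ℕ, Ico (a 0) (a n) ⊆ ⋃ k : Fin n, Ico (a k) (a (k + 1))
  | 0, x, hx => absurd hx (by simp)
  | n + 1, x, hx => by
    by_cases hxn : x < a n
    · obtain ⟨k, hxk⟩ := mem_iUnion.1 (Ico_subset_iUnion_Ico_succ a n ⟨hx.1, hxn⟩)
      exact mem_iUnion.2 ⟨k.castSucc, hxk⟩
    · exact mem_iUnion.2 ⟨Fin.last n, le_of_not_gt hxn, hx.2⟩

theorem aemeasurable_of_continuousOn_of_ae_mem_iUnion {α β ι : Type*} [Countable ι]
    [MeasurableSpace α] [TopologicalSpace α] [OpensMeasurableSpace α]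
    [MeasurableSpace β] [TopologicalSpace β] [BorelSpace β] {μ : Measure α} {f : α → β}
    {s : ι → Set α} (hs : ∀ i, MeasurableSet (s i)) (hf : ∀ i, ContinuousOn f (s i))
    (h : ∀ᵐ x ∂μ, x ∈ ⋃ i, s i) : AEMeasurable f μ := by
  rw [← Measure.restrict_eq_self_of_ae_mem h]
  exact aemeasurable_iUnion_iff.2 fun i => (hf i).aemeasurable (hs i)

theorem ContinuousOn.mapsTo_of_measure_preimage_compl_eq_zero {α β : Type*} [MeasurableSpace α]
    [TopologicalSpace α] [TopologicalSpace β] {μ : Measure α} {f : α → β} {s : Set α}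
    {F : Set β} (hf : ContinuousOn f s) (hF : IsClosed F)
    (hpos : ∀ x ∈ s, ∀ t ∈ 𝓝[s] x, 0 < μ t) (h0 : μ (f ⁻¹' Fᶜ) = 0) : MapsTo f s F := by
  intro x hx
  by_contra hfx
  have hnhds : f ⁻¹' Fᶜ ∈ 𝓝[s] x := hf x hx (hF.isOpen_compl.mem_nhds hfx)
  exact (hpos x hx _ hnhds).ne' h0

theorem image_Icc_subset_of_image_Ioo_subset {α β : Type*} [LinearOrder α] [TopologicalSpace α]
    [OrderTopology α] [DenselyOrdered α] [TopologicalSpace β] {f : α → β} {a b : α} {F : Set β}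
    (hab : a < b) (hf : ContinuousOn f (Icc a b)) (hF : IsClosed F) (h : f '' Ioo a b ⊆ F) :
    f '' Icc a b ⊆ F := by
  rw [← closure_Ioo hab.ne] at hf ⊢
  exact hf.image_closure.trans (closure_minimal h hF)

section DistributionFunction

variable {μ : Measure ℝ} {F₀ Finv : ℝ → ℝ}

theorem monotone_of_eq_toReal_measure_Icc [IsFiniteMeasure μ]
    (hF₀ : ∀ x, F₀ x = (μ (Icc 0 x)).toReal) : Monotone F₀ := fun x y hxy => by
  rw [hF₀, hF₀]
  exact ENNReal.toReal_mono (measure_ne_top μ _) (measure_mono (Icc_subset_Icc_right hxy))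

theorem strictMonoOn_of_leftInvOn [IsFiniteMeasure μ] (hF₀ : ∀ x, F₀ x = (μ (Icc 0 x)).toReal)
    (hinv : LeftInvOn Finv F₀ (Icc 0 1)) : StrictMonoOn F₀ (Icc 0 1) :=
  ((monotone_of_eq_toReal_measure_Icc hF₀).monotoneOn _).strictMonoOn_of_injOn hinv.injOn

theorem continuous_of_rightInvOn [IsProbabilityMeasure μ]
    (hF₀ : ∀ x, F₀ x = (μ (Icc 0 x)).toReal) (hinv : RightInvOn Finv F₀ (Icc 0 1)) :
    Continuous F₀ := by
  have hmem : ∀ x, F₀ x ∈ Icc (0 : ℝ) 1 := fun x => by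
    rw [hF₀]
    exact ⟨ENNReal.toReal_nonneg, ENNReal.toReal_le_of_le_ofReal zero_le_one (by simp [prob_le_one])⟩
  have hmono : Monotone (codRestrict F₀ _ hmem) := monotone_of_eq_toReal_measure_Icc hF₀
  have hsurj : Function.Surjective (codRestrict F₀ _ hmem) := fun v =>
    ⟨Finv v, Subtype.ext (hinv v.2)⟩
  exact continuous_subtype_val.comp (hmono.continuous_of_surjective hsurj)

theorem measure_Ioc_pos_of_lt [IsFiniteMeasure μ] (hF₀ : ∀ x, F₀ x = (μ (Icc 0 x)).toReal)
    {b c : ℝ} (hbc : F₀ b < F₀ c) : 0 < μ (Ioc b c) := by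
  rw [hF₀, hF₀, ENNReal.toReal_lt_toReal (measure_ne_top μ _) (measure_ne_top μ _)] at hbc
  have hcover : Icc 0 c ⊆ Icc 0 b ∪ Ioc b c := fun x hx => by
    rcases le_or_gt x b with hxb | hxb
    exacts [Or.inl ⟨hx.1, hxb⟩, Or.inr ⟨hxb, hx.2⟩]
  by_contra! h0
  have : μ (Icc 0 c) ≤ μ (Icc 0 b) := by
    simpa [nonpos_iff_eq_zero.1 h0] using
      (measure_mono (μ := μ) hcover).trans (measure_union_le _ _)
  exact this.not_gt hbc

theorem measure_pos_of_mem_nhdsWithin_Ico [IsFiniteMeasure μ]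
    (hF₀ : ∀ x, F₀ x = (μ (Icc 0 x)).toReal) (hstrict : StrictMonoOn F₀ (Icc 0 1))
    {p q x : ℝ} {t : Set ℝ} (hp : 0 ≤ p) (hq : q ≤ 1) (hx : x ∈ Ico p q) (ht : t ∈ 𝓝[Ico p q] x) :
    0 < μ t := by
  have ht' : t ∩ Ico x q ∈ 𝓝[≥] x := by
    rw [← nhdsWithin_Ico_eq_nhdsGE hx.2]
    exact inter_mem (nhdsWithin_mono x (Ico_subset_Ico_left hx.1) ht) self_mem_nhdsWithin
  obtain ⟨u, hxu, hsub⟩ := mem_nhdsGE_iff_exists_Icc_subset.1 ht'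
  have hu : u < q := (hsub ⟨hxu.le, le_rfl⟩).2.2
  have hF₀xu : F₀ x < F₀ u := hstrict ⟨hp.trans hx.1, (hx.2.trans_le hq).le⟩
    ⟨hp.trans (hx.1.trans hxu.le), (hu.trans_le hq).le⟩ hxu
  calc 0 < μ (Ioc x u) := measure_Ioc_pos_of_lt hF₀ hF₀xu
    _ ≤ μ t := measure_mono (Ioc_subset_Icc_self.trans (hsub.trans inter_subset_left))

theorem eq_one_of_one_le [IsProbabilityMeasure μ] (hF₀ : ∀ x, F₀ x = (μ (Icc 0 x)).toReal)
    (hμ1 : μ (Ico 0 1) = 1) {x : ℝ} (hx : 1 ≤ x) : F₀ x = 1 := by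
  rw [hF₀, prob_le_one.antisymm (hμ1 ▸ measure_mono (Ico_subset_Icc_self.trans
    (Icc_subset_Icc_right hx))), ENNReal.toReal_one]

theorem mapsTo_Ico_of_leftInvOn [IsProbabilityMeasure μ]
    (hF₀ : ∀ x, F₀ x = (μ (Icc 0 x)).toReal) (hμ1 : μ (Ico 0 1) = 1)
    (hinv : LeftInvOn Finv F₀ (Icc 0 1)) : MapsTo F₀ (Ico 0 1) (Ico 0 1) := fun y hy =>
  ⟨by simp [hF₀], eq_one_of_one_le hF₀ hμ1 le_rfl ▸ strictMonoOn_of_leftInvOn hF₀ hinv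
    (Ico_subset_Icc_self hy) ⟨zero_le_one, le_rfl⟩ hy.2⟩

theorem mapsTo_Ioo_Ico_of_rightInvOn [IsProbabilityMeasure μ]
    (hF₀ : ∀ x, F₀ x = (μ (Icc 0 x)).toReal) (hμ1 : μ (Ico 0 1) = 1)
    (hinv : RightInvOn Finv F₀ (Icc 0 1)) : MapsTo Finv (Ioo 0 1) (Ico 0 1) := by
  intro v hv
  rw [← hinv (Ioo_subset_Icc_self hv)] at hv
  refine ⟨le_of_not_gt fun h0 => hv.1.ne' ?_, lt_of_not_ge fun h1 => hv.2.ne ?_⟩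
  · rw [hF₀, Icc_eq_empty_of_lt h0, measure_empty, ENNReal.toReal_zero]
  · exact eq_one_of_one_le hF₀ hμ1 h1

end DistributionFunction

section Branch

variable {T τ F₀ Finv ℱ : ℝ → ℝ} {I : Set ℝ}

theorem mapsTo_graph_of_branch (hT : MapsTo T I (Ico 0 1)) (hτT : ∀ x ∈ I, τ (T x) = x)
    (hF₀ : MapsTo F₀ (Ico 0 1) (Ico 0 1)) (hinv : LeftInvOn Finv F₀ (Icc 0 1))
    (hℱ : ∀ v ∈ Ico (0 : ℝ) 1, ℱ v = F₀ (τ (Finv v))) :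
    MapsTo (fun u => (F₀ u, F₀ (T u))) I ((fun v => (ℱ v, v)) '' Icc 0 1) := by
  intro u hu
  have hTu := hT hu
  refine ⟨F₀ (T u), Ico_subset_Icc_self (hF₀ hTu), ?_⟩
  simp only [Prod.mk.injEq, and_true]
  rw [hℱ _ (hF₀ hTu), hinv (Ico_subset_Icc_self hTu), hτT u hu]

theorem graph_subset_of_mapsTo_branch {F : Set (ℝ × ℝ)} (hF : IsClosed F)
    (hℱc : ContinuousOn ℱ (Icc 0 1)) (hτ : ∀ y ∈ Ico (0 : ℝ) 1, τ y ∈ I ∧ T (τ y) = y)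
    (hFinv : MapsTo Finv (Ioo 0 1) (Ico 0 1)) (hinv : RightInvOn Finv F₀ (Icc 0 1))
    (hℱ : ∀ v ∈ Ico (0 : ℝ) 1, ℱ v = F₀ (τ (Finv v)))
    (hIF : MapsTo (fun u => (F₀ u, F₀ (T u))) I F) :
    (fun v => (ℱ v, v)) '' Icc 0 1 ⊆ F := by
  refine image_Icc_subset_of_image_Ioo_subset zero_lt_one (hℱc.prodMk continuousOn_id) hF ?_
  rintro _ ⟨v, hv, rfl⟩
  obtain ⟨hτI, hTτ⟩ := hτ _ (hFinv hv)
  convert hIF hτI using 1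
  simp only [Prod.mk.injEq]
  rw [hTτ, hinv (Ioo_subset_Icc_self hv), hℱ v (Ioo_subset_Ico_self hv)]
  exact ⟨rfl, rfl⟩

end Branch

theorem support_of_copula_measure_general
    (T : ℝ → ℝ) (N : ℕ) (a : ℕ → ℝ) (τ : ℕ → ℝ → ℝ)
    (ha0 : a 0 = 0) (haN : a N = 1) (hamono : StrictMonoOn a (Set.Iic N))
    (hbranch : ∀ k < N,
      ContinuousOn T (Ico (a k) (a (k + 1))) ∧
      StrictMonoOn T (Ico (a k) (a (k + 1))) ∧
      T (a k) = 0 ∧ T '' Ico (a k) (a (k + 1)) = Ico (0 : ℝ) 1)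
    (hτ : ∀ k < N, (∀ x ∈ Ico (a k) (a (k + 1)), τ k (T x) = x) ∧
      ∀ y ∈ Ico (0 : ℝ) 1, τ k y ∈ Ico (a k) (a (k + 1)) ∧ T (τ k y) = y)
    (μ : Measure ℝ) [IsProbabilityMeasure μ] (hμ1 : μ (Ico (0 : ℝ) 1) = 1)
    (F₀ Finv : ℝ → ℝ) (hF₀ : ∀ x, F₀ x = (μ (Icc 0 x)).toReal)
    (hinv : Set.InvOn Finv F₀ (Icc 0 1) (Icc 0 1))
    (ℱ : ℕ → ℝ → ℝ)
    (hℱc : ∀ k < N, ContinuousOn (ℱ k) (Icc 0 1))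
    (hℱ : ∀ k < N, ∀ v ∈ Ico (0 : ℝ) 1, ℱ k v = F₀ (τ k (Finv v))) :
    IsClosed (⋃ k ∈ Finset.range N, (fun v => (ℱ k v, v)) '' Icc (0 : ℝ) 1) ∧
    (Measure.map (fun u => (F₀ u, F₀ (T u))) μ)
        (⋃ k ∈ Finset.range N, (fun v => (ℱ k v, v)) '' Icc (0 : ℝ) 1)ᶜ = 0 ∧
    ∀ F : Set (ℝ × ℝ), IsClosed F →
      (Measure.map (fun u => (F₀ u, F₀ (T u))) μ) Fᶜ = 0 →
      (⋃ k ∈ Finset.range N, (fun v => (ℱ k v, v)) '' Icc (0 : ℝ) 1) ⊆ F := by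
  have hcont : Continuous F₀ := continuous_of_rightInvOn hF₀ hinv.2
  have hcover : ∀ᵐ u ∂μ, u ∈ ⋃ k : Fin N, Ico (a k) (a (k + 1)) :=
    ((ae_mem_iff_measure_eq measurableSet_Ico.nullMeasurableSet).2 (by rw [hμ1, measure_univ])).mono
      fun u hu => Ico_subset_iUnion_Ico_succ a N (ha0 ▸ haN ▸ hu)
  have hG : AEMeasurable (fun u => (F₀ u, F₀ (T u))) μ :=
    hcont.measurable.aemeasurable.prodMk (hcont.measurable.comp_aemeasurable
      (aemeasurable_of_continuousOn_of_ae_mem_iUnion (fun _ => measurableSet_Ico)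
        (fun k : Fin N => (hbranch k k.2).1) hcover))
  have hclosed : IsClosed (⋃ k ∈ Finset.range N, (fun v => (ℱ k v, v)) '' Icc (0 : ℝ) 1) :=
    isClosed_biUnion_finset fun k hk => (isCompact_Icc.image_of_continuousOn
      ((hℱc k (Finset.mem_range.1 hk)).prodMk continuousOn_id)).isClosed
  refine ⟨hclosed, ?_, fun F hF hF0 => iUnion₂_subset fun k hk => ?_⟩
  · rw [Measure.map_apply_of_aemeasurable hG hclosed.measurableSet.compl]
    refine ae_iff.1 (hcover.mono fun u hu => ?_)
    obtain ⟨k, hu⟩ := mem_iUnion.1 hu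
    exact mem_biUnion (Finset.mem_range.2 k.2) (mapsTo_graph_of_branch
      ((hbranch k k.2).2.2.2 ▸ mapsTo_image T _) (hτ k k.2).1
      (mapsTo_Ico_of_leftInvOn hF₀ hμ1 hinv.1) hinv.1 (hℱ k k.2) hu)
  · rw [Measure.map_apply_of_aemeasurable hG hF.measurableSet.compl] at hF0
    replace hk := Finset.mem_range.1 hk
    have hbounds : 0 ≤ a k ∧ a (k + 1) ≤ 1 := ha0 ▸ haN ▸
      ⟨hamono.monotoneOn N.zero_le hk.le k.zero_le, hamono.monotoneOn hk (le_refl N) hk⟩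
    refine graph_subset_of_mapsTo_branch hF (hℱc k hk) (hτ k hk).2
      (mapsTo_Ioo_Ico_of_rightInvOn hF₀ hμ1 hinv.2) hinv.2 (hℱ k hk)
      (ContinuousOn.mapsTo_of_measure_preimage_compl_eq_zero ?_ hF (fun x hx t ht => ?_) hF0)
    · exact hcont.continuousOn.prodMk (hcont.comp_continuousOn (hbranch k hk).1)
    · exact measure_pos_of_mem_nhdsWithin_Ico hF₀ (strictMonoOn_of_leftInvOn hF₀ hinv.1)
        hbounds.1 hbounds.2 hx ht

theorem support_of_copula_measure
    (T : ℝ → ℝ) (N : ℕ) (hN : 1 ≤ N) (a : ℕ → ℝ) (τ : ℕ → ℝ → ℝ)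
    (ha0 : a 0 = 0) (haN : a N = 1) (hamono : StrictMonoOn a (Set.Iic N))
    (hbranch : ∀ k < N,
      ContinuousOn T (Ico (a k) (a (k + 1))) ∧
      StrictMonoOn T (Ico (a k) (a (k + 1))) ∧
      T (a k) = 0 ∧ T '' Ico (a k) (a (k + 1)) = Ico (0 : ℝ) 1)
    (hτ : ∀ k < N, (∀ x ∈ Ico (a k) (a (k + 1)), τ k (T x) = x) ∧
      ∀ y ∈ Ico (0 : ℝ) 1, τ k y ∈ Ico (a k) (a (k + 1)) ∧ T (τ k y) = y)
    (μ : Measure ℝ) [IsProbabilityMeasure μ] (hμ1 : μ (Ico (0 : ℝ) 1) = 1)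
    (ρ : ℝ → ℝ) (hρc : ContinuousOn ρ (Icc 0 1)) (hρpos : ∀ x ∈ Icc (0 : ℝ) 1, 0 < ρ x)
    (hμρ : μ = (volume.restrict (Ico (0 : ℝ) 1)).withDensity fun x => ENNReal.ofReal (ρ x))
    (F₀ Finv : ℝ → ℝ) (hF₀ : ∀ x, F₀ x = (μ (Icc 0 x)).toReal)
    (hinv : Set.InvOn Finv F₀ (Icc 0 1) (Icc 0 1))
    (ℱ : ℕ → ℝ → ℝ)
    (hℱc : ∀ k < N, ContinuousOn (ℱ k) (Icc 0 1))
    (hℱ : ∀ k < N, ∀ v ∈ Ico (0 : ℝ) 1, ℱ k v = F₀ (τ k (Finv v)))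
    (hℱ1 : ∀ k < N, ℱ k 1 = F₀ (a (k + 1))) :
    IsClosed (⋃ k ∈ Finset.range N, (fun v => (ℱ k v, v)) '' Icc (0 : ℝ) 1) ∧
    (Measure.map (fun u => (F₀ u, F₀ (T u))) μ)
        (⋃ k ∈ Finset.range N, (fun v => (ℱ k v, v)) '' Icc (0 : ℝ) 1)ᶜ = 0 ∧
    ∀ F : Set (ℝ × ℝ), IsClosed F →
      (Measure.map (fun u => (F₀ u, F₀ (T u))) μ) Fᶜ = 0 →
      (⋃ k ∈ Finset.range N, (fun v => (ℱ k v, v)) '' Icc (0 : ℝ) 1) ⊆ F :=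
  support_of_copula_measure_general T N a τ ha0 haN hamono hbranch hτ μ hμ1 F₀ Finv hF₀ hinv ℱ hℱc
    hℱ
end

section
/- Let s > 0, let 2 ≤ h_2 < h_3 < ⋯ < h_n be integers, and let 0 = a_0 < a_1 < ⋯ < a_{2^{h_n}} = 1 be the nodes of T_s^{h_n} (so that T_s^{h_n} restricted to each [a_k, a_{k+1}) is continuous, strictly increasing, vanishes at a_k and maps the node onto [0,1)). Then for all x_2,…,x_n ∈ [0,1) and every k ∈ {0,…,2^{h_n} − 1}, the set (⋂_{i=2}^{n} (T_s^{h_i})^{−1}([0, x_i])) ∩ [a_k, a_{k+1}) is either empty or an interval containing its left endpoint a_k (i.e., of the form [a_k, b_k] or [a_k, b_k) for some b_k ∈ [a_k, a_{k+1}]). In particular, the intersection ⋂_{i=2}^{n} (T_s^{h_i})^{−1}([0, x_i]) is a union of at most 2^{h_n} pairwise disjoint intervals, each anchored at a node of T_s^{h_n}. -/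
/-!
On a branch `I` of `T_s^m`, every iterate `T_s^j` with `j ≤ m` is strictly increasing: if `I`
contained two points `p < q` with `p + p^(1+s) < 1 ≤ q + q^(1+s)`, the intermediate value theorem
would give `c ∈ (p, q]` with `T_s c = 0`, hence `T_s^m c = 0 ≤ T_s^m p`, contradicting
monotonicity. So `T_s` is a continuous increasing map on `I`, its image is again an interval,
and induction applies. Consequently each `(T_s^{h_i})⁻¹ [0, x_i]` meets the branch
`[a_k, a_{k+1})` of `T_s^{h_n}` in a set closed downwards within that branch, and such a set is
empty or an interval starting at `a_k`.
-/

open Set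

/-- The Manneville–Pomeau transformation `T_s(x) = x + x^(1+s) (mod 1)`. -/
noncomputable def MP (s : ℝ) (x : ℝ) : ℝ :=
  if x + x ^ (1 + s) < 1 then x + x ^ (1 + s) else x + x ^ (1 + s) - 1

theorem Set.eq_empty_or_eq_Icc_or_eq_Ico_of_Icc_subset {α : Type*}
    [ConditionallyCompleteLinearOrder α] {a b : α} {T : Set α} (hT : T ⊆ Ico a b)
    (hdown : ∀ z ∈ T, Icc a z ⊆ T) :
    T = ∅ ∨ ∃ c ∈ Icc a b, T = Icc a c ∨ T = Ico a c := by
  rcases T.eq_empty_or_nonempty with hT₀ | ⟨z, hz⟩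
  · exact Or.inl hT₀
  right
  have hbdd : BddAbove T := ⟨b, fun t ht => (hT ht).2.le⟩
  have ha : a ∈ T := hdown z hz ⟨le_rfl, (hT hz).1⟩
  have hle : ∀ t ∈ T, t ≤ sSup T := fun t ht => le_csSup hbdd ht
  refine ⟨sSup T, ⟨hle a ha, csSup_le ⟨z, hz⟩ fun t ht => (hT ht).2.le⟩, ?_⟩
  by_cases hc : sSup T ∈ T
  · exact Or.inl <| Subset.antisymm (fun t ht => ⟨(hT ht).1, hle t ht⟩) (hdown _ hc)
  · refine Or.inr <| Subset.antisymm
      (fun t ht => ⟨(hT ht).1, (hle t ht).lt_of_ne (by rintro rfl; exact hc ht)⟩) ?_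
    rintro t ⟨hat, htc⟩
    obtain ⟨w, hw, htw⟩ := exists_lt_of_lt_csSup ⟨z, hz⟩ htc
    exact hdown w hw ⟨hat, htw.le⟩

section MannevillePomeau

variable {s : ℝ}

theorem continuous_add_rpow_one_add (hs : 0 < s) : Continuous fun x : ℝ => x + x ^ (1 + s) :=
  continuous_id.add (Real.continuous_rpow_const (by linarith))

theorem strictMonoOn_add_rpow_one_add (hs : 0 < s) :
    StrictMonoOn (fun x : ℝ => x + x ^ (1 + s)) (Ici 0) :=
  fun _ hx _ _ hxy => add_lt_add hxy (Real.rpow_lt_rpow hx hxy (by linarith))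

theorem MP_zero (hs : 0 < s) : MP s 0 = 0 := by
  simp [MP, Real.zero_rpow (by linarith : 1 + s ≠ 0)]

theorem MP_mem_Ico (hs : 0 < s) {x : ℝ} (hx : x ∈ Ico (0 : ℝ) 1) : MP s x ∈ Ico (0 : ℝ) 1 := by
  have h₀ : 0 ≤ x ^ (1 + s) := Real.rpow_nonneg hx.1 _
  have h₁ : x ^ (1 + s) < 1 := Real.rpow_lt_one hx.1 hx.2 (by linarith)
  unfold MP
  split_ifs with hc
  · exact ⟨by linarith [hx.1], hc⟩
  · exact ⟨by linarith, by linarith [hx.2]⟩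

theorem iterate_MP_zero (hs : 0 < s) (m : ℕ) : (MP s)^[m] 0 = 0 :=
  Function.iterate_fixed (MP_zero hs) m

theorem iterate_MP_mem_Ico (hs : 0 < s) (m : ℕ) {x : ℝ} (hx : x ∈ Ico (0 : ℝ) 1) :
    (MP s)^[m] x ∈ Ico (0 : ℝ) 1 :=
  MapsTo.iterate (fun _ => MP_mem_Ico hs) m hx

theorem exists_eqOn_MP_of_strictMonoOn_iterate (hs : 0 < s) {I : Set ℝ} (hI : I.OrdConnected)
    (hI01 : I ⊆ Ico 0 1) {m : ℕ} (hmono : StrictMonoOn (MP s)^[m + 1] I) :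
    ∃ e : ℝ, EqOn (MP s) (fun x => x + x ^ (1 + s) - e) I := by
  set g : ℝ → ℝ := fun x => x + x ^ (1 + s)
  have hg : StrictMonoOn g I := (strictMonoOn_add_rpow_one_add hs).mono fun t ht => (hI01 ht).1
  by_cases hbelow : ∀ t ∈ I, g t < 1
  · exact ⟨0, fun t ht => (if_pos (hbelow t ht)).trans (sub_zero _).symm⟩
  simp only [not_forall, not_lt] at hbelow
  obtain ⟨q, hq, hgq⟩ := hbelow
  refine ⟨1, fun p hp => if_neg fun hgp => ?_⟩
  have hpq : p ≤ q := (hg.lt_iff_lt hp hq).1 (hgp.trans_le hgq) |>.le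
  obtain ⟨c, hc, hgc⟩ := intermediate_value_Icc hpq (continuous_add_rpow_one_add hs).continuousOn
    (show (1 : ℝ) ∈ Icc (g p) (g q) from ⟨hgp.le, hgq⟩)
  have hcI : c ∈ I := hI.out hp hq hc
  have hpc : p < c := (hg.lt_iff_lt hp hcI).1 (hgp.trans_eq hgc.symm)
  have hMPc : MP s c = 0 := by simp [MP, show c + c ^ (1 + s) = 1 from hgc]
  have hlt := hmono hp hcI hpc
  rw [Function.iterate_succ_apply _ m c, hMPc, iterate_MP_zero hs] at hlt
  exact (iterate_MP_mem_Ico hs (m + 1) (hI01 hp)).1.not_gt hlt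

theorem strictMonoOn_MP_of_strictMonoOn_iterate (hs : 0 < s) {I : Set ℝ} (hI : I.OrdConnected)
    (hI01 : I ⊆ Ico 0 1) {m : ℕ} (hmono : StrictMonoOn (MP s)^[m + 1] I) :
    StrictMonoOn (MP s) I ∧ (MP s '' I).OrdConnected := by
  obtain ⟨e, he⟩ := exists_eqOn_MP_of_strictMonoOn_iterate hs hI hI01 hmono
  refine ⟨StrictMonoOn.congr (fun p hp q hq hpq => ?_) he.symm, ?_⟩
  · exact sub_lt_sub_right (strictMonoOn_add_rpow_one_add hs (hI01 hp).1 (hI01 hq).1 hpq) e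
  · rw [he.image_eq]
    exact (hI.isPreconnected.image _
      ((continuous_add_rpow_one_add hs).sub continuous_const).continuousOn).ordConnected

theorem strictMonoOn_iterate_MP_of_le (hs : 0 < s) {m : ℕ} :
    ∀ {I : Set ℝ}, I.OrdConnected → I ⊆ Ico 0 1 → StrictMonoOn (MP s)^[m] I →
      ∀ {j : ℕ}, j ≤ m → StrictMonoOn (MP s)^[j] I := by
  induction m with
  | zero =>
    intro I _ _ hmono j hj
    rwa [Nat.le_zero.1 hj]
  | succ m ih =>
    intro I hI hI01 hmono j hj
    obtain ⟨hMP, hJ⟩ := strictMonoOn_MP_of_strictMonoOn_iterate hs hI hI01 hmono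
    have hJ01 : MP s '' I ⊆ Ico 0 1 := image_subset_iff.2 fun t ht => MP_mem_Ico hs (hI01 ht)
    have hmonoJ : StrictMonoOn (MP s)^[m] (MP s '' I) := by
      rintro _ ⟨p, hp, rfl⟩ _ ⟨q, hq, rfl⟩ hpq
      exact hmono hp hq ((hMP.lt_iff_lt hp hq).1 hpq)
    cases j with
    | zero => exact fun _ _ _ _ h => h
    | succ j => exact (ih hJ hJ01 hmonoJ (Nat.le_of_succ_le_succ hj)).comp hMP (mapsTo_image _ _)

end MannevillePomeau

theorem intersection_of_iterate_preimages_anchored_at_nodes_general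
    (s : ℝ) (hs : 0 < s) (n : ℕ) (h : ℕ → ℕ)
    (hhmono : ∀ i, 2 ≤ i → i < n → h i < h (i + 1))
    (a : ℕ → ℝ) (ha0 : a 0 = 0) (haN : a (2 ^ h n) = 1)
    (hamono : StrictMonoOn a (Set.Iic (2 ^ h n)))
    (hbranch : ∀ k < 2 ^ h n,
      ContinuousOn ((MP s)^[h n]) (Ico (a k) (a (k + 1))) ∧
      StrictMonoOn ((MP s)^[h n]) (Ico (a k) (a (k + 1))) ∧
      (MP s)^[h n] (a k) = 0 ∧
      (MP s)^[h n] '' Ico (a k) (a (k + 1)) = Ico (0 : ℝ) 1)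
    (x : ℕ → ℝ) :
    ∀ k < 2 ^ h n,
      (⋂ i ∈ Finset.Icc 2 n, ((MP s)^[h i]) ⁻¹' Icc 0 (x i)) ∩
          Ico (a k) (a (k + 1)) = ∅ ∨
      ∃ b ∈ Icc (a k) (a (k + 1)),
        ((⋂ i ∈ Finset.Icc 2 n, ((MP s)^[h i]) ⁻¹' Icc 0 (x i)) ∩
            Ico (a k) (a (k + 1)) = Icc (a k) b) ∨
        ((⋂ i ∈ Finset.Icc 2 n, ((MP s)^[h i]) ⁻¹' Icc 0 (x i)) ∩
            Ico (a k) (a (k + 1)) = Ico (a k) b) := by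
  intro k hk
  have hI01 : Ico (a k) (a (k + 1)) ⊆ Ico 0 1 := by
    rw [← ha0, ← haN]
    exact Ico_subset_Ico (hamono.monotoneOn (Nat.zero_le _) hk.le (Nat.zero_le k))
      (hamono.monotoneOn (Nat.succ_le_of_lt hk) (mem_Iic.2 le_rfl) hk)
  have hh : MonotoneOn h (Icc 2 n) :=
    (strictMonoOn_of_lt_add_one ordConnected_Icc fun i _ hi hi1 => hhmono i hi.1 hi1.2).monotoneOn
  have hmono : ∀ i ∈ Finset.Icc 2 n, MonotoneOn (MP s)^[h i] (Ico (a k) (a (k + 1))) :=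
    fun i hi =>
      have hi := Finset.mem_Icc.1 hi
      (strictMonoOn_iterate_MP_of_le hs ordConnected_Ico hI01 (hbranch k hk).2.1
        (hh hi ⟨hi.1.trans hi.2, le_rfl⟩ hi.2)).monotoneOn
  refine eq_empty_or_eq_Icc_or_eq_Ico_of_Icc_subset inter_subset_right ?_
  rintro z ⟨hzS, hzI⟩ y hy
  have hyI : y ∈ Ico (a k) (a (k + 1)) := ⟨hy.1, hy.2.trans_lt hzI.2⟩
  refine ⟨mem_iInter₂.2 fun i hi => ⟨(iterate_MP_mem_Ico hs _ (hI01 hyI)).1, ?_⟩, hyI⟩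
  exact (hmono i hi hyI hzI hy.2).trans (mem_iInter₂.1 hzS i hi).2

theorem intersection_of_iterate_preimages_anchored_at_nodes
    (s : ℝ) (hs : 0 < s) (n : ℕ) (hn : 2 ≤ n) (h : ℕ → ℕ)
    (hh2 : 2 ≤ h 2) (hhmono : ∀ i, 2 ≤ i → i < n → h i < h (i + 1))
    (a : ℕ → ℝ) (ha0 : a 0 = 0) (haN : a (2 ^ h n) = 1)
    (hamono : StrictMonoOn a (Set.Iic (2 ^ h n)))
    (hbranch : ∀ k < 2 ^ h n,
      ContinuousOn ((MP s)^[h n]) (Ico (a k) (a (k + 1))) ∧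
      StrictMonoOn ((MP s)^[h n]) (Ico (a k) (a (k + 1))) ∧
      (MP s)^[h n] (a k) = 0 ∧
      (MP s)^[h n] '' Ico (a k) (a (k + 1)) = Ico (0 : ℝ) 1)
    (x : ℕ → ℝ) (hx : ∀ i ∈ Finset.Icc 2 n, x i ∈ Ico (0 : ℝ) 1) :
    ∀ k < 2 ^ h n,
      (⋂ i ∈ Finset.Icc 2 n, ((MP s)^[h i]) ⁻¹' Icc 0 (x i)) ∩
          Ico (a k) (a (k + 1)) = ∅ ∨
      ∃ b ∈ Icc (a k) (a (k + 1)),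
        ((⋂ i ∈ Finset.Icc 2 n, ((MP s)^[h i]) ⁻¹' Icc 0 (x i)) ∩
            Ico (a k) (a (k + 1)) = Icc (a k) b) ∨
        ((⋂ i ∈ Finset.Icc 2 n, ((MP s)^[h i]) ⁻¹' Icc 0 (x i)) ∩
            Ico (a k) (a (k + 1)) = Ico (a k) b) :=
  intersection_of_iterate_preimages_anchored_at_nodes_general s hs n h hhmono a ha0 haN hamono
    hbranch x
end

section
/- Let (μ_n)_{n≥1} be probability measures on [0,1] converging weakly to a probability measure μ that is absolutely continuous with respect to Lebesgue measure. Let f_n : [0,1] → [0,1] be continuous functions converging uniformly to a continuous function f : [0,1] → [0,1]; let (a_m)_{m≥1} ⊆ [0,1] with a_m → a; and let g_m : [0,1] → [0,1] be continuous functions converging uniformly to a continuous function g : [0,1] → [0,1]. Then for every ε > 0 there exists N such that for all m, n ≥ N and all v ∈ [0,1], |μ_n([a_m, g_m(f_n(v))]) − μ([a, g(f(v))])| < ε; that is, μ_n([a_m, g_m(f_n(v))]) converges to μ([a, g(f(v))]) uniformly in v as m, n → ∞ (and the two iterated limits in m and n also exist and equal this common limit). -/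
/-!
Since `μ ≪ volume`, `μ` has no atoms, so its distribution function `F` is continuous and, by the
portmanteau theorem, both `x ↦ μₙ (Iic x)` and `x ↦ μₙ (Iio x)` converge pointwise to `F`.
Monotone functions converging pointwise to a continuous limit converge locally uniformly (Pólya),
and `μₙ [c, d] = (μₙ (Iic d) - μₙ (Iio c))⁺`, so `μₙ [c, d] → μ [c, d]` uniformly for
`(c, d) ∈ [0, 1]²`, where the limit is uniformly continuous. Since `(aₘ, gₘ (fₙ v))` tends to
`(a, g (f v))` uniformly in `v`, composing the two uniform convergences gives the claim.
-/

open Set Filter MeasureTheory Topology ProbabilityTheory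

theorem TendstoUniformlyOn.comp_tendsto {ι ι' α β : Type*} [UniformSpace β] {F : ι → α → β}
    {f : α → β} {p : Filter ι} {s : Set α} (h : TendstoUniformlyOn F f p s) {u : ι' → ι}
    {q : Filter ι'} (hu : Tendsto u q p) : TendstoUniformlyOn (fun i => F (u i)) f q s :=
  fun U hU => hu.eventually (h U hU)

theorem TendstoUniformlyOn.comp_tendstoUniformlyOn {ι α β γ : Type*} [UniformSpace β]
    [UniformSpace γ] {l : Filter ι} {G : ι → β → γ} {g : β → γ} {F : ι → α → β} {f : α → β}
    {s : Set α} {t : Set β} (hG : TendstoUniformlyOn G g l t) (hg : UniformContinuousOn g t)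
    (hF : TendstoUniformlyOn F f l s) (hFt : ∀ᶠ i in l, MapsTo (F i) s t) (hft : MapsTo f s t) :
    TendstoUniformlyOn (fun i x => G i (F i x)) (fun x => g (f x)) l s := by
  intro u hu
  obtain ⟨v, hv, hvu⟩ := comp_mem_uniformity_sets hu
  filter_upwards [hg.comp_tendstoUniformlyOn_eventually hFt hft hF v hv, hG v hv, hFt]
    with i hgF hGg hFi x hx
  exact hvu ⟨g (F i x), hgF x hx, hGg _ (hFi hx)⟩

/-- Pólya's theorem, in local form. -/
theorem tendstoLocallyUniformly_of_monotone_of_continuous {ι : Type*} {l : Filter ι}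
    {F : ι → ℝ → ℝ} {G : ℝ → ℝ} (hF : ∀ i, Monotone (F i)) (hG : Continuous G)
    (h : ∀ x, Tendsto (fun i => F i x) l (𝓝 (G x))) : TendstoLocallyUniformly F G l := by
  rw [Metric.tendstoLocallyUniformly_iff]
  intro ε hε x
  obtain ⟨δ, hδ, hGδ⟩ := Metric.continuous_iff.1 hG x (ε / 4) (by positivity)
  have hG_near : ∀ y ∈ Icc (x - δ / 2) (x + δ / 2), |G y - G x| < ε / 4 := fun y hy =>
    hGδ y (by rw [Real.dist_eq, abs_lt]; constructor <;> linarith [hy.1, hy.2])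
  refine ⟨Icc (x - δ / 2) (x + δ / 2), Icc_mem_nhds (by linarith) (by linarith), ?_⟩
  filter_upwards [Metric.tendsto_nhds.1 (h (x - δ / 2)) (ε / 4) (by positivity),
    Metric.tendsto_nhds.1 (h (x + δ / 2)) (ε / 4) (by positivity)] with i hlo hhi y hy
  -- `F i y` is squeezed between `F i` at the two endpoints, where `F i ≈ G ≈ G x ≈ G y`.
  have hG_lo := hG_near (x - δ / 2) (left_mem_Icc.2 (by linarith))
  have hG_hi := hG_near (x + δ / 2) (right_mem_Icc.2 (by linarith))
  have hG_y := hG_near y hy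
  have hF_lo := hF i hy.1
  have hF_hi := hF i hy.2
  rw [Real.dist_eq, abs_lt] at hlo hhi ⊢
  rw [abs_lt] at hG_lo hG_hi hG_y
  constructor <;> linarith

theorem tendsto_measureReal_of_forall_integral_tendsto {Ω ι : Type*} [MeasurableSpace Ω]
    [TopologicalSpace Ω] [OpensMeasurableSpace Ω] [HasOuterApproxClosed Ω] {L : Filter ι}
    {μs : ι → Measure Ω} [∀ i, IsProbabilityMeasure (μs i)] {μ : Measure Ω}
    [IsProbabilityMeasure μ]
    (h : ∀ φ : BoundedContinuousFunction Ω ℝ,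
      Tendsto (fun i => ∫ x, φ x ∂(μs i)) L (𝓝 (∫ x, φ x ∂μ)))
    {s : Set Ω} (hs : μ (frontier s) = 0) :
    Tendsto (fun i => (μs i).real s) L (𝓝 (μ.real s)) := by
  have hP := (ProbabilityMeasure.tendsto_iff_forall_integral_tendsto
    (μs := fun i => (⟨μs i, inferInstance⟩ : ProbabilityMeasure Ω))
    (μ := ⟨μ, inferInstance⟩)).2 h
  exact (ENNReal.tendsto_toReal (measure_ne_top μ s)).comp
    (ProbabilityMeasure.tendsto_measure_of_null_frontier_of_tendsto' hP hs)

theorem measureReal_Icc_eq_max_sub (ν : Measure ℝ) [IsFiniteMeasure ν] (c d : ℝ) :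
    ν.real (Icc c d) = max (ν.real (Iic d) - ν.real (Iio c)) 0 := by
  rcases le_or_gt c d with hcd | hdc
  · rw [← Iio_union_Icc_eq_Iic hcd,
      measureReal_union ((Iio_disjoint_Ici le_rfl).mono_right Icc_subset_Ici_self)
        measurableSet_Icc, add_sub_cancel_left, max_eq_left measureReal_nonneg]
  · rw [Icc_eq_empty hdc.not_ge, measureReal_empty, max_eq_right]
    exact sub_nonpos.2 (measureReal_mono (Iic_subset_Iio.2 hdc))

namespace ProbabilityTheory

variable (μ : Measure ℝ) [IsProbabilityMeasure μ] [NullSingletonClass μ]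

theorem continuous_cdf : Continuous (cdf μ) := by
  refine continuous_iff_continuousAt.2 fun x => ?_
  rw [(cdf μ).mono.continuousAt_iff_leftLim_eq_rightLim, StieltjesFunction.rightLim_eq]
  have h := (cdf μ).measure_singleton x
  rw [measure_cdf, measure_singleton, eq_comm, ENNReal.ofReal_eq_zero, sub_nonpos] at h
  exact le_antisymm ((cdf μ).mono.leftLim_le le_rfl) h

theorem measureReal_Icc_eq_max_cdf_sub (c d : ℝ) :
    μ.real (Icc c d) = max (cdf μ d - cdf μ c) 0 := by
  rw [measureReal_Icc_eq_max_sub, cdf_eq_real, cdf_eq_real, measureReal_congr Iio_ae_eq_Iic]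

theorem continuous_measureReal_Icc : Continuous fun z : ℝ × ℝ => μ.real (Icc z.1 z.2) := by
  simp_rw [measureReal_Icc_eq_max_cdf_sub]
  exact (((continuous_cdf μ).comp continuous_snd).sub
    ((continuous_cdf μ).comp continuous_fst)).max continuous_const

theorem tendstoLocallyUniformly_measureReal_Icc {ι : Type*} {L : Filter ι}
    {μs : ι → Measure ℝ} [∀ i, IsProbabilityMeasure (μs i)]
    (h : ∀ φ : BoundedContinuousFunction ℝ ℝ,
      Tendsto (fun i => ∫ x, φ x ∂(μs i)) L (𝓝 (∫ x, φ x ∂μ))) :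
    TendstoLocallyUniformly (fun i (z : ℝ × ℝ) => (μs i).real (Icc z.1 z.2))
      (fun z => μ.real (Icc z.1 z.2)) L := by
  have hIic : TendstoLocallyUniformly (fun i x => (μs i).real (Iic x)) (cdf μ) L := by
    refine tendstoLocallyUniformly_of_monotone_of_continuous
      (fun i _ _ hxy => measureReal_mono (Iic_subset_Iic.2 hxy)) (continuous_cdf μ) fun x => ?_
    rw [cdf_eq_real]
    exact tendsto_measureReal_of_forall_integral_tendsto h (by simp)
  have hIio : TendstoLocallyUniformly (fun i x => (μs i).real (Iio x)) (cdf μ) L := by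
    refine tendstoLocallyUniformly_of_monotone_of_continuous
      (fun i _ _ hxy => measureReal_mono (Iio_subset_Iio hxy)) (continuous_cdf μ) fun x => ?_
    rw [cdf_eq_real, ← measureReal_congr Iio_ae_eq_Iic]
    exact tendsto_measureReal_of_forall_integral_tendsto h (by simp)
  simp_rw [measureReal_Icc_eq_max_cdf_sub μ, measureReal_Icc_eq_max_sub]
  exact (LipschitzWith.id.max_const 0).uniformContinuous.comp_tendstoLocallyUniformly
    ((hIic.comp Prod.snd continuous_snd).sub (hIio.comp Prod.fst continuous_fst))

end ProbabilityTheory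

theorem uniform_convergence_of_interval_measures_general
    (μseq : ℕ → Measure ℝ) (μ : Measure ℝ)
    [∀ n, IsProbabilityMeasure (μseq n)] [IsProbabilityMeasure μ]
    (hac : μ ≪ volume)
    (hweak : ∀ φ : BoundedContinuousFunction ℝ ℝ,
      Tendsto (fun n => ∫ x, φ x ∂(μseq n)) atTop (nhds (∫ x, φ x ∂μ)))
    (f : ℕ → ℝ → ℝ) (f₀ : ℝ → ℝ)
    (hfmaps : ∀ n, Set.MapsTo (f n) (Icc (0 : ℝ) 1) (Icc (0 : ℝ) 1))
    (hf₀maps : Set.MapsTo f₀ (Icc (0 : ℝ) 1) (Icc (0 : ℝ) 1))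
    (hfconv : TendstoUniformlyOn f f₀ atTop (Icc 0 1))
    (aseq : ℕ → ℝ) (a : ℝ) (haseq : ∀ m, aseq m ∈ Icc (0 : ℝ) 1)
    (ha : Tendsto aseq atTop (nhds a))
    (g : ℕ → ℝ → ℝ) (g₀ : ℝ → ℝ)
    (hgmaps : ∀ m, Set.MapsTo (g m) (Icc (0 : ℝ) 1) (Icc (0 : ℝ) 1))
    (hg₀c : ContinuousOn g₀ (Icc 0 1))
    (hg₀maps : Set.MapsTo g₀ (Icc (0 : ℝ) 1) (Icc (0 : ℝ) 1))
    (hgconv : TendstoUniformlyOn g g₀ atTop (Icc 0 1)) :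
    ∀ ε > 0, ∃ N : ℕ, ∀ m ≥ N, ∀ n ≥ N, ∀ v ∈ Icc (0 : ℝ) 1,
      |((μseq n) (Icc (aseq m) (g m (f n v)))).toReal -
        (μ (Icc a (g₀ (f₀ v)))).toReal| < ε := by
  have : NullSingletonClass μ := ⟨fun x => hac (measure_singleton x)⟩
  have hK : IsCompact (Icc (0 : ℝ) 1 ×ˢ Icc (0 : ℝ) 1) := isCompact_Icc.prod isCompact_Icc
  have hI := tendstoLocallyUniformly_iff_forall_isCompact.1
    (tendstoLocallyUniformly_measureReal_Icc μ hweak) _ hK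
  have hgf : TendstoUniformlyOn (fun (i : ℕ × ℕ) v => g i.1 (f i.2 v)) (fun v => g₀ (f₀ v))
      (atTop ×ˢ atTop) (Icc 0 1) :=
    (hgconv.comp_tendsto tendsto_fst).comp_tendstoUniformlyOn
      (isCompact_Icc.uniformContinuousOn_of_continuous hg₀c) (hfconv.comp_tendsto tendsto_snd)
      (.of_forall fun i => hfmaps i.2) hf₀maps
  have hpt : TendstoUniformlyOn (fun (i : ℕ × ℕ) v => (aseq i.1, g i.1 (f i.2 v)))
      (fun v => (a, g₀ (f₀ v))) (atTop ×ˢ atTop) (Icc 0 1) :=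
    (((ha.comp tendsto_fst).tendstoUniformlyOn_const _).prodMk hgf).comp_tendsto tendsto_diag
  have hmain := (hI.comp_tendsto tendsto_snd).comp_tendstoUniformlyOn
    (hK.uniformContinuousOn_of_continuous (continuous_measureReal_Icc μ).continuousOn) hpt
    (.of_forall fun i v hv => ⟨haseq i.1, hgmaps i.1 (hfmaps i.2 hv)⟩)
    (fun v hv => ⟨isClosed_Icc.mem_of_tendsto ha (.of_forall haseq), hg₀maps (hf₀maps hv)⟩)
  intro ε hε
  have hclose := Metric.tendstoUniformlyOn_iff.1 hmain ε hε
  rw [prod_atTop_atTop_eq] at hclose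
  obtain ⟨N, hN⟩ := eventually_atTop_prod_self'.1 hclose
  refine ⟨N, fun m hm n hn v hv => ?_⟩
  rw [abs_sub_comm, ← Real.dist_eq]
  exact hN m hm n hn v hv

theorem uniform_convergence_of_interval_measures
    (μseq : ℕ → Measure ℝ) (μ : Measure ℝ)
    [∀ n, IsProbabilityMeasure (μseq n)] [IsProbabilityMeasure μ]
    (hsupp : ∀ n, μseq n (Icc (0 : ℝ) 1) = 1) (hsuppμ : μ (Icc (0 : ℝ) 1) = 1)
    (hac : μ ≪ volume)
    (hweak : ∀ φ : BoundedContinuousFunction ℝ ℝ,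
      Tendsto (fun n => ∫ x, φ x ∂(μseq n)) atTop (nhds (∫ x, φ x ∂μ)))
    (f : ℕ → ℝ → ℝ) (f₀ : ℝ → ℝ)
    (hfc : ∀ n, ContinuousOn (f n) (Icc 0 1))
    (hfmaps : ∀ n, Set.MapsTo (f n) (Icc (0 : ℝ) 1) (Icc (0 : ℝ) 1))
    (hf₀c : ContinuousOn f₀ (Icc 0 1))
    (hf₀maps : Set.MapsTo f₀ (Icc (0 : ℝ) 1) (Icc (0 : ℝ) 1))
    (hfconv : TendstoUniformlyOn f f₀ atTop (Icc 0 1))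
    (aseq : ℕ → ℝ) (a : ℝ) (haseq : ∀ m, aseq m ∈ Icc (0 : ℝ) 1)
    (ha : Tendsto aseq atTop (nhds a))
    (g : ℕ → ℝ → ℝ) (g₀ : ℝ → ℝ)
    (hgc : ∀ m, ContinuousOn (g m) (Icc 0 1))
    (hgmaps : ∀ m, Set.MapsTo (g m) (Icc (0 : ℝ) 1) (Icc (0 : ℝ) 1))
    (hg₀c : ContinuousOn g₀ (Icc 0 1))
    (hg₀maps : Set.MapsTo g₀ (Icc (0 : ℝ) 1) (Icc (0 : ℝ) 1))
    (hgconv : TendstoUniformlyOn g g₀ atTop (Icc 0 1)) :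
    ∀ ε > 0, ∃ N : ℕ, ∀ m ≥ N, ∀ n ≥ N, ∀ v ∈ Icc (0 : ℝ) 1,
      |((μseq n) (Icc (aseq m) (g m (f n v)))).toReal -
        (μ (Icc a (g₀ (f₀ v)))).toReal| < ε :=
  uniform_convergence_of_interval_measures_general μseq μ hac hweak f f₀ hfmaps hf₀maps hfconv aseq
    a haseq ha g g₀ hgmaps hg₀c hg₀maps hgconv
end
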